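/- (Theorem on partial keypoint-guided OT.) Suppose G_{i,j} ≥ 0 for all i,j, A > 0, Σ_{i∈I} p_i < s, Σ_{j∈J} q_j < s, and Π(p̄,q̄;M̄) ≠ ∅. Let π̄* be a minimizer of ⟨M̄⊙π̄, Ḡ⟩_F over π̄ ∈ Π(p̄,q̄;M̄), and let π̈ be the upper-left m×n block of π̄*. Then π̈ ∈ Π^s(p,q;M) and M⊙π̈ is an optimal transport plan of the partial problem, i.e., Σ_{i,j} M_{i,j} π̈_{i,j} G_{i,j} = min over π ∈ Π^s(p,q;M) of Σ_{i,j} M_{i,j} π_{i,j} G_{i,j}. -/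

import Mathlib

open Finset

noncomputable section

variable {m n : ℕ}

/-- Mask matrix determined by the keypoint pair set `K`:
`M i j = 1` if `(i,j) ∈ K`; `M i j = 0` if `i ∈ I` or `j ∈ J` but `(i,j) ∉ K`;
`M i j = 1` otherwise. -/
def mask (K : Finset (Fin m × Fin n)) : Matrix (Fin m) (Fin n) ℝ :=
  fun i j =>
    if (i, j) ∈ K then 1
    else if (∃ j', (i, j') ∈ K) ∨ (∃ i', (i', j) ∈ K) then 0
    else 1

/-- The masked feasible set `Π(p, q; M)`. -/
def PiM (M : Matrix (Fin m) (Fin n) ℝ) (p : Fin m → ℝ) (q : Fin n → ℝ) :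
    Set (Matrix (Fin m) (Fin n) ℝ) :=
  {π | (∀ i j, 0 ≤ π i j) ∧ (∀ i, ∑ j, M i j * π i j = p i) ∧
    (∀ j, ∑ i, M i j * π i j = q j)}

/-- Extend an `m × n` matrix by one extra column, one extra row and a corner entry. -/
def extend (B : Matrix (Fin m) (Fin n) ℝ) (col : Fin m → ℝ) (row : Fin n → ℝ)
    (corner : ℝ) : Matrix (Fin (m + 1)) (Fin (n + 1)) ℝ :=
  fun i j =>
    if hi : (i : ℕ) < m then
      if hj : (j : ℕ) < n then B ⟨i, hi⟩ ⟨j, hj⟩ else col ⟨i, hi⟩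
    else if hj : (j : ℕ) < n then row ⟨j, hj⟩ else corner

/-- Extend a vector by one extra entry. -/
def extVec (v : Fin m → ℝ) (last : ℝ) : Fin (m + 1) → ℝ :=
  fun i => if hi : (i : ℕ) < m then v ⟨i, hi⟩ else last

/-- `a i = 0` if `i ∈ I` and `1` otherwise. -/
def avec (K : Finset (Fin m × Fin n)) : Fin m → ℝ :=
  fun i => if ∃ j, (i, j) ∈ K then 0 else 1

/-- `b j = 0` if `j ∈ J` and `1` otherwise. -/
def bvec (K : Finset (Fin m × Fin n)) : Fin n → ℝ :=
  fun j => if ∃ i, (i, j) ∈ K then 0 else 1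

/-- The extended mask `M̄`. -/
def Mbar (K : Finset (Fin m × Fin n)) : Matrix (Fin (m + 1)) (Fin (n + 1)) ℝ :=
  extend (mask K) (avec K) (bvec K) 1

/-- The extended guiding matrix `Ḡ`. -/
def Gbar (G : Matrix (Fin m) (Fin n) ℝ) (ξ A : ℝ) :
    Matrix (Fin (m + 1)) (Fin (n + 1)) ℝ :=
  extend G (fun _ => ξ) (fun _ => ξ) (2 * ξ + A)

/-- The extended source weights `p̄ = (pᵀ, ‖q‖₁ − s)ᵀ`. -/
def pbar (p : Fin m → ℝ) (q : Fin n → ℝ) (s : ℝ) : Fin (m + 1) → ℝ :=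
  extVec p (∑ j, q j - s)

/-- The extended target weights `q̄ = (qᵀ, ‖p‖₁ − s)ᵀ`. -/
def qbar (p : Fin m → ℝ) (q : Fin n → ℝ) (s : ℝ) : Fin (n + 1) → ℝ :=
  extVec q (∑ i, p i - s)

/-- The partial masked feasible set `Π^s(p, q; M)`. -/
def PiPartial (K : Finset (Fin m × Fin n)) (p : Fin m → ℝ) (q : Fin n → ℝ) (s : ℝ) :
    Set (Matrix (Fin m) (Fin n) ℝ) :=
  {π | (∀ i j, 0 ≤ π i j) ∧ (∀ i, ∑ j, mask K i j * π i j ≤ p i) ∧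
    (∀ j, ∑ i, mask K i j * π i j ≤ q j) ∧
    (∑ i, ∑ j, mask K i j * π i j = s) ∧
    (∀ i, (∃ j, (i, j) ∈ K) → ∑ j, mask K i j * π i j = p i) ∧
    (∀ j, (∃ i, (i, j) ∈ K) → ∑ i, mask K i j * π i j = q j)}

/-!
Write a plan of the extended problem in blocks as `extend B c r t`: the plan `B` between real
points, the mass `c`, `r` sent to the dummy points and the dummy-to-dummy mass `t`. On feasible
plans the dummy marginals force the extended cost to be
`⟨M ⊙ B, G⟩ + ξ (‖p‖₁ + ‖q‖₁ - 2 s) + A t`, and the masked mass of `B` to be `s + t`.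
At a minimizer `t = 0`, since otherwise a cycle through the dummy corner lowers the cost;
so `B` has mass `s` and lies in `Π^s(p, q; M)`. Conversely every `π ∈ Π^s(p, q; M)`, completed
by its row and column slacks and `t = 0`, is feasible for the extended problem, and comparing
the two costs gives optimality.
-/
def maskedCost (M C π : Matrix (Fin m) (Fin n) ℝ) : ℝ :=
  ∑ i, ∑ j, M i j * π i j * C i j

lemma maskedCost_sub_smul (M C π R : Matrix (Fin m) (Fin n) ℝ) (δ : ℝ) :
    maskedCost M C (π - δ • R) = maskedCost M C π - δ * maskedCost M C R := by
  simp only [maskedCost, Matrix.sub_apply, Matrix.smul_apply, smul_eq_mul, mul_sum,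
    ← sum_sub_distrib]
  exact sum_congr rfl fun i _ => sum_congr rfl fun j _ => by ring

def rectShift (i₀ i₁ : Fin m) (j₀ j₁ : Fin n) : Matrix (Fin m) (Fin n) ℝ :=
  Matrix.vecMulVec (Pi.single i₀ 1 - Pi.single i₁ 1) (Pi.single j₀ 1 - Pi.single j₁ 1)

section rectShift

variable {i₀ i₁ : Fin m} {j₀ j₁ : Fin n}

lemma sum_mul_rectShift_row_eq_zero (M : Matrix (Fin m) (Fin n) ℝ)
    (h₀ : M i₀ j₀ = M i₀ j₁) (h₁ : M i₁ j₀ = M i₁ j₁) (i : Fin m) :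
    ∑ j, M i j * rectShift i₀ i₁ j₀ j₁ i j = 0 := by
  by_cases hi₀ : i = i₀ <;> by_cases hi₁ : i = i₁ <;>
    simp [rectShift, Matrix.vecMulVec_apply, Pi.single_apply, mul_sub, sum_sub_distrib, *]

lemma sum_mul_rectShift_col_eq_zero (M : Matrix (Fin m) (Fin n) ℝ)
    (h₀ : M i₀ j₀ = M i₁ j₀) (h₁ : M i₀ j₁ = M i₁ j₁) (j : Fin n) :
    ∑ i, M i j * rectShift i₀ i₁ j₀ j₁ i j = 0 := by
  by_cases hj₀ : j = j₀ <;> by_cases hj₁ : j = j₁ <;>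
    simp [rectShift, Matrix.vecMulVec_apply, Pi.single_apply, mul_sub, sum_sub_distrib, *]

lemma maskedCost_rectShift (M C : Matrix (Fin m) (Fin n) ℝ) :
    maskedCost M C (rectShift i₀ i₁ j₀ j₁) =
      M i₀ j₀ * C i₀ j₀ - M i₀ j₁ * C i₀ j₁ - M i₁ j₀ * C i₁ j₀ + M i₁ j₁ * C i₁ j₁ := by
  simp [maskedCost, rectShift, Matrix.vecMulVec_apply, Pi.single_apply, mul_sub, sub_mul,
    sum_sub_distrib]
  ring

lemma sub_smul_rectShift_nonneg {π : Matrix (Fin m) (Fin n) ℝ} (hπ : ∀ i j, 0 ≤ π i j)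
    (hi : i₀ ≠ i₁) (hj : j₀ ≠ j₁) {δ : ℝ} (hδ : 0 ≤ δ) (h₀ : δ ≤ π i₀ j₀) (h₁ : δ ≤ π i₁ j₁)
    (i : Fin m) (j : Fin n) : 0 ≤ (π - δ • rectShift i₀ i₁ j₀ j₁) i j := by
  have := hπ i j
  simp only [Matrix.sub_apply, Matrix.smul_apply, rectShift, Matrix.vecMulVec_apply,
    Pi.sub_apply, Pi.single_apply, smul_eq_mul]
  split_ifs <;> subst_vars <;> first | (exfalso; tauto) | (simp; linarith)

lemma sub_smul_rectShift_mem_PiM {M π : Matrix (Fin m) (Fin n) ℝ} {p : Fin m → ℝ}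
    {q : Fin n → ℝ} (hπ : π ∈ PiM M p q) (hM₀₀ : M i₀ j₀ = 1) (hM₀₁ : M i₀ j₁ = 1)
    (hM₁₀ : M i₁ j₀ = 1) (hM₁₁ : M i₁ j₁ = 1) (hi : i₀ ≠ i₁) (hj : j₀ ≠ j₁) {δ : ℝ}
    (hδ : 0 ≤ δ) (h₀ : δ ≤ π i₀ j₀) (h₁ : δ ≤ π i₁ j₁) :
    π - δ • rectShift i₀ i₁ j₀ j₁ ∈ PiM M p q := by
  obtain ⟨hnn, hrow, hcol⟩ := hπ
  refine ⟨sub_smul_rectShift_nonneg hnn hi hj hδ h₀ h₁, fun i => ?_, fun j => ?_⟩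
  · simp only [Matrix.sub_apply, Matrix.smul_apply, smul_eq_mul, mul_sub, sum_sub_distrib,
      mul_left_comm _ δ, ← mul_sum, hrow]
    rw [sum_mul_rectShift_row_eq_zero M (by rw [hM₀₀, hM₀₁]) (by rw [hM₁₀, hM₁₁]), mul_zero,
      sub_zero]
  · simp only [Matrix.sub_apply, Matrix.smul_apply, smul_eq_mul, mul_sub, sum_sub_distrib,
      mul_left_comm _ δ, ← mul_sum, hcol]
    rw [sum_mul_rectShift_col_eq_zero M (by rw [hM₀₀, hM₁₀]) (by rw [hM₀₁, hM₁₁]), mul_zero,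
      sub_zero]

end rectShift

section extend

variable (B : Matrix (Fin m) (Fin n) ℝ) (c : Fin m → ℝ) (r : Fin n → ℝ) (t : ℝ)

@[simp] lemma extend_castSucc_castSucc (i : Fin m) (j : Fin n) :
    extend B c r t i.castSucc j.castSucc = B i j := by
  simp [extend]

@[simp] lemma extend_castSucc_last (i : Fin m) :
    extend B c r t i.castSucc (Fin.last n) = c i := by
  simp [extend]

@[simp] lemma extend_last_castSucc (j : Fin n) :
    extend B c r t (Fin.last m) j.castSucc = r j := by
  simp [extend]

@[simp] lemma extend_last_last : extend B c r t (Fin.last m) (Fin.last n) = t := by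
  simp [extend]

@[simp] lemma extVec_castSucc (i : Fin m) : extVec c t i.castSucc = c i := by
  simp [extVec]

@[simp] lemma extVec_last : extVec c t (Fin.last m) = t := by
  simp [extVec]

lemma exists_eq_extend (π : Matrix (Fin (m + 1)) (Fin (n + 1)) ℝ) :
    ∃ B c r t, π = extend B c r t := by
  refine ⟨fun i j => π i.castSucc j.castSucc, fun i => π i.castSucc (Fin.last n),
    fun j => π (Fin.last m) j.castSucc, π (Fin.last m) (Fin.last n), ?_⟩
  ext i j
  rcases i.eq_castSucc_or_eq_last with ⟨i, rfl⟩ | rfl <;>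
    rcases j.eq_castSucc_or_eq_last with ⟨j, rfl⟩ | rfl <;> simp [extend]

lemma extend_nonneg_iff :
    (∀ i j, 0 ≤ extend B c r t i j) ↔
      (∀ i j, 0 ≤ B i j) ∧ (∀ i, 0 ≤ c i) ∧ (∀ j, 0 ≤ r j) ∧ 0 ≤ t := by
  simp only [Fin.forall_fin_succ', extend_castSucc_castSucc, extend_castSucc_last,
    extend_last_castSucc, extend_last_last, forall_and]
  tauto

end extend

section keypoints

variable {K : Finset (Fin m × Fin n)} {i : Fin m} {j : Fin n}

lemma avec_eq_zero (hi : ∃ j, (i, j) ∈ K) : avec K i = 0 := if_pos hi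

lemma avec_eq_one (hi : ¬∃ j, (i, j) ∈ K) : avec K i = 1 := if_neg hi

lemma bvec_eq_zero (hj : ∃ i, (i, j) ∈ K) : bvec K j = 0 := if_pos hj

lemma bvec_eq_one (hj : ¬∃ i, (i, j) ∈ K) : bvec K j = 1 := if_neg hj

lemma avec_nonneg (K : Finset (Fin m × Fin n)) (i : Fin m) : 0 ≤ avec K i := by
  unfold avec; split_ifs <;> norm_num

lemma bvec_nonneg (K : Finset (Fin m × Fin n)) (j : Fin n) : 0 ≤ bvec K j := by
  unfold bvec; split_ifs <;> norm_num

lemma avec_mul_eq_self {x : ℝ} (hx : (∃ j, (i, j) ∈ K) → x = 0) : avec K i * x = x := by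
  by_cases hi : ∃ j, (i, j) ∈ K
  · rw [hx hi, mul_zero]
  · rw [avec_eq_one hi, one_mul]

lemma bvec_mul_eq_self {x : ℝ} (hx : (∃ i, (i, j) ∈ K) → x = 0) : bvec K j * x = x := by
  by_cases hj : ∃ i, (i, j) ∈ K
  · rw [hx hj, mul_zero]
  · rw [bvec_eq_one hj, one_mul]

lemma mask_eq_one_of_not_mem (hi : ¬∃ j', (i, j') ∈ K) (hj : ¬∃ i', (i', j) ∈ K) :
    mask K i j = 1 := by
  simp [mask, hi, hj]

lemma not_mem_of_mask_ne_zero (hi : ¬∃ j', (i, j') ∈ K) (hM : mask K i j ≠ 0) :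
    ¬∃ i', (i', j) ∈ K := by
  intro hj
  exact hM (by simp [mask, hj, show (i, j) ∉ K from fun h => hi ⟨j, h⟩])

lemma exists_pos_of_sum_filter_lt {B : Matrix (Fin m) (Fin n) ℝ}
    (hlt : ∑ i ∈ univ.filter (fun i => ∃ j, (i, j) ∈ K), ∑ j, mask K i j * B i j
      < ∑ i, ∑ j, mask K i j * B i j) :
    ∃ i j, (¬∃ j', (i, j') ∈ K) ∧ (¬∃ i', (i', j) ∈ K) ∧ 0 < B i j := by
  rw [← sum_filter_add_sum_filter_not univ (fun i => ∃ j, (i, j) ∈ K)] at hlt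
  obtain ⟨i, hi, hrow⟩ := exists_lt_of_sum_lt (f := fun _ => (0 : ℝ))
    (s := univ.filter (fun i => ¬∃ j, (i, j) ∈ K)) (by simp only [sum_const_zero]; linarith)
  obtain ⟨j, -, hij⟩ := exists_lt_of_sum_lt (f := fun _ => (0 : ℝ)) (by simpa using hrow)
  have hi : ¬∃ j, (i, j) ∈ K := (mem_filter.1 hi).2
  have hM : mask K i j ≠ 0 := fun h => by simp [h] at hij
  have hj := not_mem_of_mask_ne_zero hi hM
  refine ⟨i, j, hi, hj, ?_⟩
  simpa [mask_eq_one_of_not_mem hi hj] using hij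

end keypoints

section extendedProblem

variable {K : Finset (Fin m × Fin n)} {p : Fin m → ℝ} {q : Fin n → ℝ} {s : ℝ}
  {B : Matrix (Fin m) (Fin n) ℝ} {c : Fin m → ℝ} {r : Fin n → ℝ} {t : ℝ}

lemma extend_mem_PiM_Mbar_iff :
    extend B c r t ∈ PiM (Mbar K) (pbar p q s) (qbar p q s) ↔
      ((∀ i j, 0 ≤ B i j) ∧ (∀ i, 0 ≤ c i) ∧ (∀ j, 0 ≤ r j) ∧ 0 ≤ t) ∧
      ((∀ i, ∑ j, mask K i j * B i j + avec K i * c i = p i) ∧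
        ∑ j, bvec K j * r j + t = ∑ j, q j - s) ∧
      ((∀ j, ∑ i, mask K i j * B i j + bvec K j * r j = q j) ∧
        ∑ i, avec K i * c i + t = ∑ i, p i - s) := by
  simp only [PiM, Set.mem_ofPred_eq, extend_nonneg_iff]
  simp only [Mbar, pbar, qbar, Fin.forall_fin_succ', Fin.sum_univ_castSucc,
    extend_castSucc_castSucc, extend_castSucc_last, extend_last_castSucc, extend_last_last,
    extVec_castSucc, extVec_last, one_mul]

lemma extend_slack_mem_of_mem_PiPartial {π : Matrix (Fin m) (Fin n) ℝ}
    (hπ : π ∈ PiPartial K p q s) :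
    extend π (fun i => p i - ∑ j, mask K i j * π i j) (fun j => q j - ∑ i, mask K i j * π i j) 0
      ∈ PiM (Mbar K) (pbar p q s) (qbar p q s) := by
  obtain ⟨hnn, hrow, hcol, hmass, hI, hJ⟩ := hπ
  have hrowSlack (i : Fin m) :
      avec K i * (p i - ∑ j, mask K i j * π i j) = p i - ∑ j, mask K i j * π i j :=
    avec_mul_eq_self fun hi => by rw [hI i hi, sub_self]
  have hcolSlack (j : Fin n) :
      bvec K j * (q j - ∑ i, mask K i j * π i j) = q j - ∑ i, mask K i j * π i j :=
    bvec_mul_eq_self fun hj => by rw [hJ j hj, sub_self]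
  refine extend_mem_PiM_Mbar_iff.2 ⟨⟨hnn, fun i => sub_nonneg.2 (hrow i),
    fun j => sub_nonneg.2 (hcol j), le_rfl⟩, ⟨fun i => ?_, ?_⟩, fun j => ?_, ?_⟩
  · rw [hrowSlack]; ring
  · rw [sum_congr rfl fun j _ => hcolSlack j, sum_sub_distrib, sum_comm, hmass, add_zero]
  · rw [hcolSlack]; ring
  · rw [sum_congr rfl fun i _ => hrowSlack i, sum_sub_distrib, hmass, add_zero]

variable (h : extend B c r t ∈ PiM (Mbar K) (pbar p q s) (qbar p q s))
include h

lemma row_sum_eq_of_extend_mem {i : Fin m} (hi : ∃ j, (i, j) ∈ K) :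
    ∑ j, mask K i j * B i j = p i := by
  have := (extend_mem_PiM_Mbar_iff.1 h).2.1.1 i
  rwa [avec_eq_zero hi, zero_mul, add_zero] at this

lemma col_sum_eq_of_extend_mem {j : Fin n} (hj : ∃ i, (i, j) ∈ K) :
    ∑ i, mask K i j * B i j = q j := by
  have := (extend_mem_PiM_Mbar_iff.1 h).2.2.1 j
  rwa [bvec_eq_zero hj, zero_mul, add_zero] at this

lemma masked_mass_eq_of_extend_mem : ∑ i, ∑ j, mask K i j * B i j = s + t := by
  obtain ⟨-, ⟨hrow, -⟩, -, hlast⟩ := extend_mem_PiM_Mbar_iff.1 h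
  have := sum_congr rfl fun i (_ : i ∈ univ) => hrow i
  rw [sum_add_distrib] at this
  linarith

lemma maskedCost_Mbar_Gbar_of_extend_mem (G : Matrix (Fin m) (Fin n) ℝ) (ξ A : ℝ) :
    maskedCost (Mbar K) (Gbar G ξ A) (extend B c r t)
      = maskedCost (mask K) G B + ξ * (∑ i, p i + ∑ j, q j - 2 * s) + A * t := by
  obtain ⟨-, ⟨-, hlastRow⟩, -, hlastCol⟩ := extend_mem_PiM_Mbar_iff.1 h
  simp only [maskedCost, Mbar, Gbar, Fin.sum_univ_castSucc, extend_castSucc_castSucc,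
    extend_castSucc_last, extend_last_castSucc, extend_last_last, sum_add_distrib, ← sum_mul]
  linear_combination ξ * hlastCol + ξ * hlastRow

omit h in
lemma mem_PiPartial_of_extend_mem
    (h : extend B c r 0 ∈ PiM (Mbar K) (pbar p q s) (qbar p q s)) :
    B ∈ PiPartial K p q s := by
  obtain ⟨⟨hB, hc, hr, -⟩, ⟨hrow, -⟩, hcol, -⟩ := extend_mem_PiM_Mbar_iff.1 h
  refine ⟨hB, fun i => ?_, fun j => ?_, by rw [masked_mass_eq_of_extend_mem h, add_zero],
    fun i => row_sum_eq_of_extend_mem h, fun j => col_sum_eq_of_extend_mem h⟩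
  · linarith [hrow i, mul_nonneg (avec_nonneg K i) (hc i)]
  · linarith [hcol j, mul_nonneg (bvec_nonneg K j) (hr j)]

end extendedProblem

/-- If `t > 0`, the rows outside `I` carry masked mass `s + t - ∑_{i ∈ I} p i > 0`, so some
`B i₀ j₀ > 0` lies outside the keypoint rows and columns; moving `δ` around the rectangle
`{i₀, m} × {j₀, n}` then changes the cost by `-δ (G i₀ j₀ + A) < 0`. -/
lemma corner_eq_zero_of_isMin {K : Finset (Fin m × Fin n)} {p : Fin m → ℝ} {q : Fin n → ℝ}
    {s : ℝ} {G B : Matrix (Fin m) (Fin n) ℝ} {ξ A : ℝ} {c : Fin m → ℝ} {r : Fin n → ℝ} {t : ℝ}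
    (hG : ∀ i j, 0 ≤ G i j) (hA : 0 < A)
    (hIp : ∑ i ∈ univ.filter (fun i => ∃ j, (i, j) ∈ K), p i < s)
    (h : extend B c r t ∈ PiM (Mbar K) (pbar p q s) (qbar p q s))
    (hmin : ∀ π' ∈ PiM (Mbar K) (pbar p q s) (qbar p q s),
      maskedCost (Mbar K) (Gbar G ξ A) (extend B c r t) ≤ maskedCost (Mbar K) (Gbar G ξ A) π') :
    t = 0 := by
  obtain ⟨⟨-, -, -, ht⟩, -⟩ := extend_mem_PiM_Mbar_iff.1 h
  refine le_antisymm (not_lt.1 fun htpos => ?_) ht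
  have hI : ∑ i ∈ univ.filter (fun i => ∃ j, (i, j) ∈ K), ∑ j, mask K i j * B i j
      = ∑ i ∈ univ.filter (fun i => ∃ j, (i, j) ∈ K), p i :=
    sum_congr rfl fun i hi => row_sum_eq_of_extend_mem h (mem_filter.1 hi).2
  obtain ⟨i₀, j₀, hi₀, hj₀, hpos⟩ :=
    exists_pos_of_sum_filter_lt (by rw [hI, masked_mass_eq_of_extend_mem h]; linarith)
  have hδ : 0 < min (B i₀ j₀) t := lt_min hpos htpos
  have hmove := sub_smul_rectShift_mem_PiM h (i₀ := i₀.castSucc) (i₁ := Fin.last m)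
    (j₀ := j₀.castSucc) (j₁ := Fin.last n)
    (by simp [Mbar, mask_eq_one_of_not_mem hi₀ hj₀]) (by simp [Mbar, avec_eq_one hi₀])
    (by simp [Mbar, bvec_eq_one hj₀]) (by simp [Mbar]) (Fin.castSucc_lt_last i₀).ne
    (Fin.castSucc_lt_last j₀).ne hδ.le (by simp) (by simp)
  have hlt := hmin _ hmove
  rw [maskedCost_sub_smul, maskedCost_rectShift] at hlt
  simp only [Mbar, Gbar, extend_castSucc_castSucc, extend_castSucc_last, extend_last_castSucc,
    extend_last_last, mask_eq_one_of_not_mem hi₀ hj₀, avec_eq_one hi₀, bvec_eq_one hj₀] at hlt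
  nlinarith [mul_pos hδ (add_pos_of_nonneg_of_pos (hG i₀ j₀) hA)]

theorem partial_kpg_via_extended_problem_general
    (p : Fin m → ℝ) (q : Fin n → ℝ) (K : Finset (Fin m × Fin n)) (s : ℝ)
    (G : Matrix (Fin m) (Fin n) ℝ) (ξ A : ℝ)
    (hG : ∀ i j, 0 ≤ G i j) (hA : 0 < A)
    (hIp : ∑ i ∈ univ.filter (fun i => ∃ j, (i, j) ∈ K), p i < s)
    (πb : Matrix (Fin (m + 1)) (Fin (n + 1)) ℝ)
    (hπb : πb ∈ PiM (Mbar K) (pbar p q s) (qbar p q s))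
    (hmin : ∀ π' ∈ PiM (Mbar K) (pbar p q s) (qbar p q s),
      ∑ i, ∑ j, Mbar K i j * πb i j * Gbar G ξ A i j
        ≤ ∑ i, ∑ j, Mbar K i j * π' i j * Gbar G ξ A i j) :
    (fun (i : Fin m) (j : Fin n) => πb i.castSucc j.castSucc) ∈ PiPartial K p q s
    ∧ ∀ π ∈ PiPartial K p q s,
        ∑ i : Fin m, ∑ j : Fin n, mask K i j * πb i.castSucc j.castSucc * G i j
          ≤ ∑ i : Fin m, ∑ j : Fin n, mask K i j * π i j * G i j := by
  obtain ⟨B, c, r, t, rfl⟩ := exists_eq_extend πb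
  obtain rfl : t = 0 := corner_eq_zero_of_isMin hG hA hIp hπb hmin
  simp only [extend_castSucc_castSucc]
  refine ⟨mem_PiPartial_of_extend_mem hπb, fun π hπ => ?_⟩
  have hslack := extend_slack_mem_of_mem_PiPartial hπ
  have hle : maskedCost (Mbar K) (Gbar G ξ A) (extend B c r 0)
      ≤ maskedCost (Mbar K) (Gbar G ξ A) _ := hmin _ hslack
  rw [maskedCost_Mbar_Gbar_of_extend_mem hπb, maskedCost_Mbar_Gbar_of_extend_mem hslack] at hle
  unfold maskedCost at hle
  linarith

/-- Theorem on partial keypoint-guided OT: under `G ≥ 0`, `A > 0`,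
`∑_{i ∈ I} p i < s`, `∑_{j ∈ J} q j < s` and nonemptiness of `Π(p̄,q̄;M̄)`, the
upper-left `m × n` block `π̈` of any minimizer `π̄*` of `⟨M̄ ⊙ π̄, Ḡ⟩_F` over
`Π(p̄,q̄;M̄)` lies in `Π^s(p,q;M)` and `M ⊙ π̈` is an optimal plan of the
partial problem. -/
theorem partial_kpg_via_extended_problem
    (p : Fin m → ℝ) (q : Fin n → ℝ) (K : Finset (Fin m × Fin n)) (s : ℝ)
    (G : Matrix (Fin m) (Fin n) ℝ) (ξ A : ℝ)
    (hp : ∀ i, 0 ≤ p i) (hq : ∀ j, 0 ≤ q j)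
    (hK1 : ∀ a ∈ K, ∀ b ∈ K, a.1 = b.1 → a = b)
    (hK2 : ∀ a ∈ K, ∀ b ∈ K, a.2 = b.2 → a = b)
    (hs0 : 0 ≤ s) (hs : s ≤ min (∑ i, p i) (∑ j, q j))
    (hG : ∀ i j, 0 ≤ G i j) (hA : 0 < A)
    (hIp : ∑ i ∈ univ.filter (fun i => ∃ j, (i, j) ∈ K), p i < s)
    (hJq : ∑ j ∈ univ.filter (fun j => ∃ i, (i, j) ∈ K), q j < s)
    (hne : (PiM (Mbar K) (pbar p q s) (qbar p q s)).Nonempty)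
    (πb : Matrix (Fin (m + 1)) (Fin (n + 1)) ℝ)
    (hπb : πb ∈ PiM (Mbar K) (pbar p q s) (qbar p q s))
    (hmin : ∀ π' ∈ PiM (Mbar K) (pbar p q s) (qbar p q s),
      ∑ i, ∑ j, Mbar K i j * πb i j * Gbar G ξ A i j
        ≤ ∑ i, ∑ j, Mbar K i j * π' i j * Gbar G ξ A i j) :
    (fun (i : Fin m) (j : Fin n) => πb i.castSucc j.castSucc) ∈ PiPartial K p q s
    ∧ ∀ π ∈ PiPartial K p q s,
        ∑ i : Fin m, ∑ j : Fin n, mask K i j * πb i.castSucc j.castSucc * G i j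
          ≤ ∑ i : Fin m, ∑ j : Fin n, mask K i j * π i j * G i j :=
  partial_kpg_via_extended_problem_general p q K s G ξ A hG hA hIp πb hπb hmin
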